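/- Let B be a C*-algebra, E a Hilbert B-module, and F a closed ternary subspace of E (a closed linear subspace with f·⟨f',f''⟩ ∈ F for all f, f', f'' ∈ F). Then B_F, the closed linear span of {⟨f,f'⟩ : f, f' ∈ F}, is a C*-subalgebra of B (closed under multiplication and adjoint); moreover F·B_F ⊆ F and F equals the closed linear span of {f·b : f ∈ F, b ∈ B_F}. -/

import Mathlib

open scoped RightActions

/-- The closed linear span of a subset of a topological `ℂ`-module. -/
noncomputable def clSpan {M : Type*} [AddCommMonoid M] [Module ℂ M] [TopologicalSpace M]
    (S : Set M) : Set M :=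
  closure (Submodule.span ℂ S : Set M)

/-- A subset is a (complex) linear subspace. -/
def IsLinearSubspace {M : Type*} [AddCommMonoid M] [Module ℂ M] (K : Set M) : Prop :=
  (0 : M) ∈ K ∧ (∀ x ∈ K, ∀ y ∈ K, x + y ∈ K) ∧ ∀ (c : ℂ), ∀ x ∈ K, c • x ∈ K

/-- A closed two-sided ideal of a C*-algebra `B`. -/
structure IsClosedTwoSidedIdeal {B : Type*} [NonUnitalCStarAlgebra B] (I : Set B) : Prop where
  isClosed : IsClosed I
  subspace : IsLinearSubspace I
  mul_mem_left : ∀ (b : B), ∀ a ∈ I, b * a ∈ I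
  mul_mem_right : ∀ (b : B), ∀ a ∈ I, a * b ∈ I

/-- The December 2024 Mathlib `CStarModule` (right `A`-module via `Aᵐᵒᵖ`), restated because
Mathlib's `CStarModule` now means a left module. -/
class CStarModuleOld (A : outParam <| Type*) (E : Type*) [NonUnitalSemiring A] [StarRing A]
    [Module ℂ A] [AddCommGroup E] [Module ℂ E] [PartialOrder A] [SMul Aᵐᵒᵖ E] [Norm A] [Norm E]
    extends Inner A E where
  inner_add_right {x} {y} {z} : inner x (y + z) = inner x y + inner x z
  inner_self_nonneg {x} : 0 ≤ inner x x
  inner_self {x} : inner x x = 0 ↔ x = 0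
  inner_op_smul_right {a : A} {x y : E} : inner x (y <• a) = inner x y * a
  inner_smul_right_complex {z : ℂ} {x} {y} : inner x (z • y) = z • inner x y
  star_inner x y : star (inner x y) = inner y x
  norm_eq_sqrt_norm_inner_self x : ‖x‖ = √‖inner x x‖

section HilbertModule

variable (B : Type*) [NonUnitalCStarAlgebra B] [PartialOrder B] [StarOrderedRing B]
variable {E : Type*} [NormedAddCommGroup E] [NormedSpace ℂ E] [SMul Bᵐᵒᵖ E] [CStarModuleOld B E]

/-- `K ⊆ E` is an *ideal submodule* if it is the closed linear span of
`{x <• i : x ∈ E, i ∈ I}` for some closed two-sided ideal `I` of `B`. -/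
def IsIdealSubmodule (K : Set E) : Prop :=
  ∃ I : Set B, IsClosedTwoSidedIdeal I ∧
    K = clSpan {z : E | ∃ x : E, ∃ i ∈ I, z = x <• i}

/-- A *ternary ideal* of a Hilbert `B`-module `E`: a linear subspace `K` with
`x <• ⟪k, y⟫ ∈ K` for all `x y ∈ E` and `k ∈ K`. -/
def IsTernaryIdeal (K : Set E) : Prop :=
  IsLinearSubspace K ∧ ∀ (x y : E), ∀ k ∈ K, x <• (inner B k y : B) ∈ K

/-- `B_S`: the closed linear span in `B` of all inner products of elements of `S`. -/
noncomputable def rangeIdeal (S : Set E) : Set B :=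
  clSpan {b : B | ∃ k ∈ S, ∃ k' ∈ S, b = (inner B k k' : B)}

/-- The orthogonal complement of a subset of a Hilbert `B`-module. -/
def perp (S : Set E) : Set E :=
  {x : E | ∀ s ∈ S, (inner B x s : B) = 0}

end HilbertModule

/-!
The span of the inner products `⟪f, f'⟫` (`f, f' ∈ F`) is a `*`-subalgebra of `B`, since
`⟪f, f'⟫ ⟪g, g'⟫ = ⟪f, f' ⟪g, g'⟫⟫` and `⟪f, f'⟫* = ⟪f', f⟫`; its closure `B_F` is therefore a
C*-subalgebra. Right multiplication by `f` is continuous and linear, so `F B_F ⊆ F` follows from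
`f ⟪f', f''⟫ ∈ F` because `F` is a closed subspace. Conversely, with `a = ⟪f, f⟫ ∈ B_F` and
`c = a (ε + a)⁻¹ ∈ B_F` (continuous functional calculus), `⟪f - f c, f - f c⟫ = a (1 - c)²`
has norm at most `ε`, so `f` lies in the closure of `f B_F`.
-/
def IsLinearSubspace.toSubmodule {M : Type*} [AddCommMonoid M] [Module ℂ M] {K : Set M}
    (hK : IsLinearSubspace K) : Submodule ℂ M where
  carrier := K
  zero_mem' := hK.1
  add_mem' hx hy := hK.2.1 _ hx _ hy
  smul_mem' := hK.2.2

lemma mul_one_sub_div_add_sq_le {ε t : ℝ} (hε : 0 < ε) (ht : 0 ≤ t) :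
    t * (1 - t * (ε + t)⁻¹) ^ 2 ≤ ε := by
  have hpos : 0 < ε + t := by positivity
  have heq : t * (1 - t * (ε + t)⁻¹) ^ 2 = ε * (t * ε / (ε + t) ^ 2) := by
    field_simp; ring
  rw [heq]
  refine mul_le_of_le_one_right hε.le ((div_le_one (by positivity)).mpr ?_)
  nlinarith

lemma cfcₙ_mul_one_sub_sq {A : Type*} [NonUnitalCStarAlgebra A] {a : A} (ha : IsSelfAdjoint a)
    {g : ℝ → ℝ} (hg : ContinuousOn g (quasispectrum ℝ a)) (hg0 : g 0 = 0) :
    cfcₙ (fun t ↦ t * (1 - g t) ^ 2) a =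
      a - a * cfcₙ g a - cfcₙ g a * a + cfcₙ g a * a * cfcₙ g a := by
  have hfun : (fun t ↦ t * (1 - g t) ^ 2) = fun t ↦ t - t * g t - g t * t + g t * t * g t := by
    ext t; ring
  rw [hfun, cfcₙ_add .., cfcₙ_sub .., cfcₙ_sub .., cfcₙ_mul .., cfcₙ_mul .., cfcₙ_mul ..,
    cfcₙ_mul .., cfcₙ_id' ..]

namespace CStarModuleOld

section Algebraic

variable {A : Type*} [NonUnitalRing A] [StarRing A] [Module ℂ A] [PartialOrder A] [Norm A]
variable {E : Type*} [AddCommGroup E] [Module ℂ E] [SMul Aᵐᵒᵖ E] [Norm E] [CStarModuleOld A E]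

lemma inner_sub_right (x y z : E) : inner A x (y - z) = inner A x y - inner A x z :=
  (AddMonoidHom.mk' (inner A x) fun _ _ ↦ inner_add_right).map_sub y z

lemma inner_sub_left (x y z : E) : inner A (x - y) z = inner A x z - inner A y z := by
  rw [← star_inner z, inner_sub_right, star_sub, star_inner, star_inner]

lemma inner_op_smul_left (a : A) (x y : E) : inner A (x <• a) y = star a * inner A x y := by
  rw [← star_inner y, inner_op_smul_right, star_mul, star_inner]

lemma eq_of_forall_inner_eq {y z : E} (h : ∀ x, inner A x y = inner A x z) : y = z :=
  sub_eq_zero.mp <| inner_self.mp <| by rw [inner_sub_right, h, sub_self]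

lemma op_smul_add (x : E) (a b : A) : x <• (a + b) = x <• a + x <• b :=
  eq_of_forall_inner_eq fun _ ↦ by simp only [inner_add_right, inner_op_smul_right, mul_add]

lemma op_smul_smul_complex [SMulCommClass ℂ A A] (x : E) (z : ℂ) (a : A) :
    x <• (z • a) = z • (x <• a) :=
  eq_of_forall_inner_eq fun _ ↦ by
    simp only [inner_smul_right_complex, inner_op_smul_right, mul_smul_comm]

lemma inner_self_sub_op_smul {c : A} (hc : IsSelfAdjoint c) (x : E) :
    inner A (x - x <• c) (x - x <• c) =
      inner A x x - inner A x x * c - c * inner A x x + c * inner A x x * c := by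
  simp only [inner_sub_left, inner_sub_right, inner_op_smul_left, inner_op_smul_right, hc.star_eq,
    mul_assoc]
  noncomm_ring

end Algebraic

section Normed

variable {A : Type*} [NonUnitalCStarAlgebra A] [PartialOrder A]
variable {E : Type*} [NormedAddCommGroup E] [NormedSpace ℂ E] [SMul Aᵐᵒᵖ E] [CStarModuleOld A E]

lemma norm_op_smul_le (x : E) (a : A) : ‖x <• a‖ ≤ ‖x‖ * ‖a‖ := by
  have key : ‖inner A (x <• a) (x <• a)‖ ≤ ‖a‖ ^ 2 * ‖inner A x x‖ := by
    rw [inner_op_smul_left, inner_op_smul_right, ← mul_assoc]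
    calc ‖star a * inner A x x * a‖ ≤ ‖star a‖ * ‖inner A x x‖ * ‖a‖ := norm_mul₃_le
      _ = ‖a‖ ^ 2 * ‖inner A x x‖ := by rw [norm_star]; ring
  rw [norm_eq_sqrt_norm_inner_self, norm_eq_sqrt_norm_inner_self x, mul_comm]
  calc √‖inner A (x <• a) (x <• a)‖ ≤ √(‖a‖ ^ 2 * ‖inner A x x‖) := Real.sqrt_le_sqrt key
    _ = ‖a‖ * √‖inner A x x‖ := by rw [Real.sqrt_mul (by positivity), Real.sqrt_sq (norm_nonneg a)]

noncomputable def opSMulCLM (x : E) : A →L[ℂ] E :=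
  LinearMap.mkContinuous
    { toFun := (x <• ·)
      map_add' := op_smul_add x
      map_smul' := op_smul_smul_complex x }
    ‖x‖ (norm_op_smul_le x)

lemma op_smul_mem_of_mem_clSpan {K : Set E} (hK : IsClosed K) (hKsub : IsLinearSubspace K) {x : E}
    {S : Set A} (hS : ∀ s ∈ S, x <• s ∈ K) {b : A} (hb : b ∈ clSpan S) : x <• b ∈ K := by
  have hspan : Submodule.span ℂ S ≤ hKsub.toSubmodule.comap (opSMulCLM x : A →ₗ[ℂ] E) :=
    Submodule.span_le.mpr hS
  exact closure_minimal hspan (hK.preimage (opSMulCLM x).continuous) hb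

variable [StarOrderedRing A]

lemma norm_sub_op_smul_cfcₙ_le (x : E) {ε : ℝ} (hε : 0 < ε) :
    ‖x - x <• cfcₙ (fun t ↦ t * (ε + t)⁻¹) (inner A x x)‖ ≤ √ε := by
  have ha : 0 ≤ inner A x x := inner_self_nonneg
  have hσ : ∀ t ∈ quasispectrum ℝ (inner A x x), 0 ≤ t := quasispectrum_nonneg_of_nonneg _ ha
  have hg : ContinuousOn (fun t : ℝ ↦ t * (ε + t)⁻¹) (quasispectrum ℝ (inner A x x)) :=
    continuousOn_id.mul <| (continuousOn_const.add continuousOn_id).inv₀ fun t ht ↦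
      (add_pos_of_pos_of_nonneg hε (hσ t ht)).ne'
  rw [norm_eq_sqrt_norm_inner_self, inner_self_sub_op_smul (cfcₙ_predicate _ _),
    ← cfcₙ_mul_one_sub_sq ha.isSelfAdjoint hg (by simp)]
  gcongr
  refine norm_cfcₙ_le fun t ht ↦ ?_
  rw [Real.norm_eq_abs, abs_of_nonneg (mul_nonneg (hσ t ht) (sq_nonneg _))]
  exact mul_one_sub_div_add_sq_le hε (hσ t ht)

lemma mem_closure_image_op_smul {C : NonUnitalStarSubalgebra ℂ A} (hC : IsClosed (C : Set A))
    {x : E} (hx : inner A x x ∈ C) : x ∈ closure ((x <• ·) '' (C : Set A)) := by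
  refine Metric.mem_closure_iff.mpr fun δ hδ ↦ ?_
  refine ⟨_, ⟨_, cfcₙ_mem (hs := hC) (fun t : ℝ ↦ t * ((δ / 2) ^ 2 + t)⁻¹) hx, rfl⟩, ?_⟩
  rw [dist_eq_norm]
  calc _ ≤ √((δ / 2) ^ 2) := norm_sub_op_smul_cfcₙ_le x (by positivity)
    _ = δ / 2 := Real.sqrt_sq (by positivity)
    _ < δ := half_lt_self hδ

end Normed

end CStarModuleOld

section RangeAlgebra

open CStarModuleOld
open scoped Pointwise

variable (B : Type*) [NonUnitalCStarAlgebra B] [PartialOrder B]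
variable {E : Type*} [NormedAddCommGroup E] [NormedSpace ℂ E] [SMul Bᵐᵒᵖ E] [CStarModuleOld B E]

def IsTernary (F : Set E) : Prop :=
  ∀ f ∈ F, ∀ f' ∈ F, ∀ f'' ∈ F, f <• (inner B f' f'' : B) ∈ F

def innerProducts (F : Set E) : Set B :=
  {b | ∃ k ∈ F, ∃ k' ∈ F, b = inner B k k'}

variable {B} {F : Set E}

lemma star_mem_span_innerProducts {b : B} (hb : b ∈ Submodule.span ℂ (innerProducts B F)) :
    star b ∈ Submodule.span ℂ (innerProducts B F) := by
  induction hb using Submodule.span_induction with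
  | mem b hb =>
    obtain ⟨k, hk, k', hk', rfl⟩ := hb
    exact Submodule.subset_span ⟨k', hk', k, hk, star_inner k k'⟩
  | zero => simp
  | add a b _ _ ha hb => simpa only [star_add] using add_mem ha hb
  | smul z b _ hb => simpa only [star_smul] using Submodule.smul_mem _ _ hb

lemma IsTernary.innerProducts_mul_subset (ht : IsTernary B F) :
    innerProducts B F * innerProducts B F ⊆ innerProducts B F := by
  rintro _ ⟨_, ⟨k, hk, k', hk', rfl⟩, _, ⟨g, hg, g', hg', rfl⟩, rfl⟩
  exact ⟨k, hk, _, ht k' hk' g hg g' hg', inner_op_smul_right.symm⟩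

lemma IsTernary.mul_mem_span_innerProducts (ht : IsTernary B F) {a b : B}
    (ha : a ∈ Submodule.span ℂ (innerProducts B F))
    (hb : b ∈ Submodule.span ℂ (innerProducts B F)) :
    a * b ∈ Submodule.span ℂ (innerProducts B F) := by
  have hab := Submodule.apply_mem_map₂ (LinearMap.mul ℂ B) ha hb
  rw [Submodule.map₂_span_span] at hab
  refine Submodule.span_mono ?_ hab
  rintro _ ⟨x, hx, y, hy, rfl⟩
  exact ht.innerProducts_mul_subset (Set.mul_mem_mul hx hy)

def IsTernary.innerSpan (ht : IsTernary B F) : NonUnitalStarSubalgebra ℂ B where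
  toSubmodule := Submodule.span ℂ (innerProducts B F)
  mul_mem' := ht.mul_mem_span_innerProducts
  star_mem' := star_mem_span_innerProducts

lemma IsTernary.coe_topologicalClosure_innerSpan (ht : IsTernary B F) :
    (ht.innerSpan.topologicalClosure : Set B) = rangeIdeal B F :=
  rfl

lemma IsTernary.op_smul_mem_of_mem_rangeIdeal (ht : IsTernary B F) (hcl : IsClosed F)
    (hsub : IsLinearSubspace F) {f : E} (hf : f ∈ F) {b : B} (hb : b ∈ rangeIdeal B F) :
    f <• b ∈ F :=
  op_smul_mem_of_mem_clSpan hcl hsub (S := innerProducts B F)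
    (fun _ ⟨k, hk, k', hk', hs⟩ ↦ hs ▸ ht f hf k hk k' hk') hb

end RangeAlgebra

theorem ternary_subspace_range_algebra
    {B : Type*} [NonUnitalCStarAlgebra B] [PartialOrder B] [StarOrderedRing B]
    {E : Type*} [NormedAddCommGroup E] [NormedSpace ℂ E] [SMul Bᵐᵒᵖ E]
    [CStarModuleOld B E] (F : Set E) (hcl : IsClosed F) (hsub : IsLinearSubspace F)
    (ht : ∀ f ∈ F, ∀ f' ∈ F, ∀ f'' ∈ F, f <• (inner B f' f'' : B) ∈ F) :
    (∀ a ∈ rangeIdeal B F, ∀ b ∈ rangeIdeal B F, a * b ∈ rangeIdeal B F) ∧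
    (∀ a ∈ rangeIdeal B F, star a ∈ rangeIdeal B F) ∧
    (∀ f ∈ F, ∀ b ∈ rangeIdeal B F, f <• b ∈ F) ∧
    clSpan {z : E | ∃ f ∈ F, ∃ b ∈ rangeIdeal B F, z = f <• b} = F := by
  have hter : IsTernary B F := ht
  have hmem : ∀ f ∈ F, ∀ b ∈ rangeIdeal B F, f <• b ∈ F := fun _ hf _ hb ↦
    hter.op_smul_mem_of_mem_rangeIdeal hcl hsub hf hb
  rw [← hter.coe_topologicalClosure_innerSpan] at hmem ⊢
  refine ⟨fun _ ha _ hb ↦ mul_mem ha hb, fun _ ha ↦ star_mem ha, hmem, ?_⟩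
  refine subset_antisymm ?_ fun f hf ↦ ?_
  · refine closure_minimal (fun z hz ↦ (Submodule.span_le (p := hsub.toSubmodule)).mpr ?_ hz) hcl
    rintro _ ⟨f, hf, b, hb, rfl⟩
    exact hmem f hf b hb
  · have hinner : inner B f f ∈ hter.innerSpan.topologicalClosure :=
      subset_closure (Submodule.subset_span ⟨f, hf, f, hf, rfl⟩)
    refine closure_mono ?_ (CStarModuleOld.mem_closure_image_op_smul
      hter.innerSpan.isClosed_topologicalClosure hinner)
    rintro _ ⟨b, hb, rfl⟩
    exact Submodule.subset_span ⟨f, hf, b, hb, rfl⟩
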